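/- For every n ≥ 1, the von Neumann entropy of the decoherence matrix restricted to A₀^{(n)} satisfies S_{A₀^{(n)}} = −(ρ_L^{(n)} log₂ ρ_L^{(n)} + ρ_R^{(n)} log₂ ρ_R^{(n)}), where ρ_L^{(n)} = (1 + (p−q)^{n−1}(p₀−q₀))/2 and ρ_R^{(n)} = (1 − (p−q)^{n−1}(p₀−q₀))/2. -/

import Mathlib

open Matrix Filter
open scoped BigOperators Classical

noncomputable section

/-- Index in `Fin 2` of a direction: `false` ↔ `-1` (index `0`), `true` ↔ `1` (index `1`). -/
def bidx (b : Bool) : Fin 2 := if b then 1 else 0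

/-- The standard basis vector `e_j`, `j ∈ {-1,1}`, of `ℂ²`. -/
def eVec (b : Bool) : Fin 2 → ℂ := fun i => if i = bidx b then 1 else 0

/-- The projection `e_j e_j†`. -/
def projC (b : Bool) : Matrix (Fin 2) (Fin 2) ℂ :=
  Matrix.single (bidx b) (bidx b) 1

/-- `P_j = e_j e_j† U`. -/
def pMat (U : Matrix (Fin 2) (Fin 2) ℂ) (b : Bool) : Matrix (Fin 2) (Fin 2) ℂ :=
  projC b * U

/-- The weight of a path `ξ = (ξ_n, …, ξ_1)` (here `ξ i` is step `i+1`):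
`w(ξ) = P_{ξ_n} ⋯ P_{ξ_1} φ₀`. -/
def weight (U : Matrix (Fin 2) (Fin 2) ℂ) (φ₀ : Fin 2 → ℂ) {n : ℕ} (ξ : Fin n → Bool) :
    Fin 2 → ℂ :=
  ((List.ofFn fun i => pMat U (ξ i)).reverse.prod).mulVec φ₀

/-- The complex inner product `⟨v, w⟩`, conjugate-linear in the first slot. -/
def cdot (v w : Fin 2 → ℂ) : ℂ := ∑ i, (starRingEnd ℂ) (v i) * w i

/-- The decoherence matrix restricted to a set `A` of pairs of paths. -/
def decMat (U : Matrix (Fin 2) (Fin 2) ℂ) (φ₀ : Fin 2 → ℂ) {n : ℕ}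
    (A : Set ((Fin n → Bool) × (Fin n → Bool))) :
    Matrix (Fin n → Bool) (Fin n → Bool) ℂ :=
  Matrix.of fun ξ η =>
    if (ξ, η) ∈ A then cdot (weight U φ₀ ξ) (weight U φ₀ η) else 0

/-- `ξ_1 + ⋯ + ξ_n ∈ ℤ`, each step being `±1`. -/
def pathSum {n : ℕ} (ξ : Fin n → Bool) : ℤ := ∑ i, (if ξ i then 1 else -1)

/-- `A₀^{(n)}`: pairs of paths with the same final direction (paths have length `n+1`). -/
def A0 (n : ℕ) : Set ((Fin (n+1) → Bool) × (Fin (n+1) → Bool)) :=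
  {x | x.1 (Fin.last n) = x.2 (Fin.last n)}

/-- `A_P^{(n)}`: pairs of paths with the same final direction and the same endpoint. -/
def AP (n : ℕ) : Set ((Fin (n+1) → Bool) × (Fin (n+1) → Bool)) :=
  {x | x.1 (Fin.last n) = x.2 (Fin.last n) ∧ pathSum x.1 = pathSum x.2}

/-- `A₁^{(n)}`: the diagonal pairs. -/
def A1 (n : ℕ) : Set ((Fin (n+1) → Bool) × (Fin (n+1) → Bool)) :=
  {x | x.1 = x.2}

/-- The von Neumann entropy `S(D) = −Σᵢ λᵢ log₂ λᵢ`, summing over the eigenvalues with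
multiplicity (the roots of the characteristic polynomial; they are real for a PSD Hermitian
matrix), with the convention `0 · log₂ 0 = 0`. -/
def vnEntropy {I : Type*} [Fintype I] [DecidableEq I] (D : Matrix I I ℂ) : ℝ :=
  -((D.charpoly.roots).map fun lam => lam.re * Real.logb 2 lam.re).sum

/-- The real projection `e_j e_j†`. -/
def projR (b : Bool) : Matrix (Fin 2) (Fin 2) ℝ :=
  Matrix.single (bidx b) (bidx b) 1

/-- The stochastic matrix `M = [[p, q], [q, p]]` of the correlated random walk, `q = 1 − p`. -/
def rwM (p : ℝ) : Matrix (Fin 2) (Fin 2) ℝ := !![p, 1-p; 1-p, p]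

/-- The initial vector `φ = (q₀, p₀)ᵀ` of the correlated random walk, `q₀ = 1 − p₀`. -/
def rwφ (p₀ : ℝ) : Fin 2 → ℝ := ![1 - p₀, p₀]

/-- `P̃_{ξ_n} ⋯ P̃_{ξ_2} φ_{ξ_1}`, where `P̃_j = e_j e_j† M` and `φ_j = e_j e_j† φ`. -/
def rwVec (p p₀ : ℝ) : {n : ℕ} → (Fin n → Bool) → (Fin 2 → ℝ)
  | 0, _ => rwφ p₀
  | n + 1, ξ =>
      ((List.ofFn fun i : Fin n => projR (ξ i.succ) * rwM p).reverse.prod).mulVec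
        ((projR (ξ 0)).mulVec (rwφ p₀))

/-- `p_L^{(n)}(j)`: the probability that the `(p₀,p)`-correlated random walk is at `j`
at time `n`, having arrived from the left. -/
def pL (p p₀ : ℝ) (n : ℕ) (j : ℤ) : ℝ :=
  ∑ ξ ∈ Finset.univ.filter (fun ξ : Fin n → Bool => pathSum ξ = j), rwVec p p₀ ξ 0

/-- `p_R^{(n)}(j)`: the probability that the `(p₀,p)`-correlated random walk is at `j`
at time `n`, having arrived from the right. -/
def pR (p p₀ : ℝ) (n : ℕ) (j : ℤ) : ℝ :=
  ∑ ξ ∈ Finset.univ.filter (fun ξ : Fin n → Bool => pathSum ξ = j), rwVec p p₀ ξ 1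

/-!
Each weight `w(ξ)` is supported on the single coordinate `e_{ξ_n}`, so `D_{A₀} = Wᴴ W` for the
`2 × 2ⁿ` matrix `W` of weights, and the nonzero spectrum of `Wᴴ W` is that of `W Wᴴ`. The latter
is diagonal, with entries the total probabilities `r_{∓1}` of ending in direction `∓1`. These
evolve by the doubly stochastic matrix `(|U_ij|²) = [[p, q], [q, p]]`, so `r_{-1} + r_1` stays `1`
while `r_1 - r_{-1}` is multiplied by `p - q` at every step.
-/
section VonNeumannEntropy
open Polynomial

theorem vnEntropy_mul_of_mul_eq_diagonal {m k : Type*} [Fintype m] [DecidableEq m]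
    [Fintype k] [DecidableEq k] (A : Matrix m k ℂ) (B : Matrix k m ℂ) (r : k → ℝ)
    (hk : Fintype.card k ≤ Fintype.card m) (hBA : B * A = diagonal fun i => (r i : ℂ)) :
    vnEntropy (A * B) = -∑ i, r i * Real.logb 2 (r i) := by
  have hprod : ∏ i, (X - C (r i : ℂ)) ≠ 0 :=
    (monic_prod_of_monic _ _ fun _ _ => monic_X_sub_C _).ne_zero
  have hroots : (A * B).charpoly.roots =
      Multiset.replicate (Fintype.card m - Fintype.card k) 0 +
        Finset.univ.val.map fun i => (r i : ℂ) := by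
    rw [charpoly_mul_comm_of_le A B hk, hBA, charpoly_diagonal,
      roots_mul (mul_ne_zero (pow_ne_zero _ X_ne_zero) hprod), roots_X_pow, roots_prod _ _ hprod]
    simp only [roots_X_sub_C, Multiset.bind_singleton, Multiset.nsmul_singleton]
  simp [vnEntropy, hroots]

end VonNeumannEntropy

section Unitary
variable {n : Type*} [Fintype n] [DecidableEq n] {U : Matrix n n ℂ}

theorem Matrix.sum_norm_sq_mulVec_of_mem_unitaryGroup (hU : U ∈ unitaryGroup n ℂ)
    (v : n → ℂ) : ∑ i, ‖(U *ᵥ v) i‖ ^ 2 = ∑ i, ‖v i‖ ^ 2 := by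
  have h : ∀ w : n → ℂ, star w ⬝ᵥ w = ((∑ i, ‖w i‖ ^ 2 : ℝ) : ℂ) := fun w => by
    push_cast
    simp [dotProduct, Complex.conj_mul']
  have hUv : star (U *ᵥ v) ⬝ᵥ (U *ᵥ v) = star v ⬝ᵥ v := by
    rw [star_mulVec, ← dotProduct_mulVec, mulVec_mulVec, ← star_eq_conjTranspose,
      Matrix.mem_unitaryGroup_iff'.mp hU, one_mulVec]
  exact_mod_cast (h _).symm.trans (hUv.trans (h v))

theorem Matrix.sum_norm_sq_col_of_mem_unitaryGroup (hU : U ∈ unitaryGroup n ℂ) (j : n) :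
    ∑ i, ‖U i j‖ ^ 2 = 1 := by
  simpa [Pi.single_apply, apply_ite] using
    sum_norm_sq_mulVec_of_mem_unitaryGroup hU (Pi.single j 1)

theorem Matrix.sum_norm_sq_row_of_mem_unitaryGroup (hU : U ∈ unitaryGroup n ℂ) (i : n) :
    ∑ j, ‖U i j‖ ^ 2 = 1 := by
  simpa using sum_norm_sq_col_of_mem_unitaryGroup (Unitary.star_mem hU) i

end Unitary

section Weight
variable (U : Matrix (Fin 2) (Fin 2) ℂ) (φ₀ : Fin 2 → ℂ)

theorem pMat_mulVec (b : Bool) (v : Fin 2 → ℂ) :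
    pMat U b *ᵥ v = Pi.single (bidx b) ((U *ᵥ v) (bidx b)) := by
  rw [pMat, ← mulVec_mulVec, projC, single_mulVec, one_mul]
  rfl

theorem weight_of_isEmpty (ξ : Fin 0 → Bool) : weight U φ₀ ξ = φ₀ := by
  simp [weight]

theorem weight_snoc {n : ℕ} (ξ : Fin n → Bool) (b : Bool) :
    weight U φ₀ (Fin.snoc ξ b) = pMat U b *ᵥ weight U φ₀ ξ := by
  simp only [weight, List.ofFn_succ', Fin.snoc_castSucc, Fin.snoc_last, List.concat_eq_append,
    List.reverse_append, List.reverse_cons, List.reverse_nil, List.nil_append,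
    List.singleton_append, List.prod_cons, mulVec_mulVec]

theorem weight_eq_single {n : ℕ} (ξ : Fin (n + 1) → Bool) :
    weight U φ₀ ξ =
      Pi.single (bidx (ξ (Fin.last n))) (weight U φ₀ ξ (bidx (ξ (Fin.last n)))) := by
  have h := weight_snoc U φ₀ (Fin.init ξ) (ξ (Fin.last n))
  rw [Fin.snoc_init_self, pMat_mulVec] at h
  rw [h, Pi.single_eq_same]

theorem weight_apply_eq_zero_of_ne {n : ℕ} (ξ : Fin (n + 1) → Bool) {i : Fin 2}
    (hi : i ≠ bidx (ξ (Fin.last n))) : weight U φ₀ ξ i = 0 := by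
  rw [weight_eq_single, Pi.single_eq_of_ne hi]

def totalWeight (n : ℕ) (i : Fin 2) : ℝ :=
  ∑ ξ : Fin n → Bool, ‖weight U φ₀ ξ i‖ ^ 2

theorem totalWeight_zero (i : Fin 2) : totalWeight U φ₀ 0 i = ‖φ₀ i‖ ^ 2 := by
  simp [totalWeight, weight_of_isEmpty]

theorem totalWeight_succ (n : ℕ) (i : Fin 2) :
    totalWeight U φ₀ (n + 1) i = ∑ ξ : Fin n → Bool, ‖(U *ᵥ weight U φ₀ ξ) i‖ ^ 2 := by
  rw [totalWeight, ← (Fin.snocEquiv fun _ => Bool).sum_comp, Fintype.sum_prod_type,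
    Finset.sum_comm]
  refine Finset.sum_congr rfl fun ξ _ => ?_
  rw [Fintype.sum_bool]
  change ‖weight U φ₀ (Fin.snoc ξ true) i‖ ^ 2 + ‖weight U φ₀ (Fin.snoc ξ false) i‖ ^ 2 = _
  simp only [weight_snoc, pMat_mulVec]
  fin_cases i <;> simp [bidx]

theorem norm_sq_mulVec_weight {n : ℕ} (ξ : Fin (n + 1) → Bool) (i : Fin 2) :
    ‖(U *ᵥ weight U φ₀ ξ) i‖ ^ 2 = ∑ j, ‖U i j‖ ^ 2 * ‖weight U φ₀ ξ j‖ ^ 2 := by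
  rw [weight_eq_single]
  simp [Pi.single_apply, apply_ite, mul_pow]

theorem totalWeight_succ_succ (n : ℕ) (i : Fin 2) :
    totalWeight U φ₀ (n + 2) i = ∑ j, ‖U i j‖ ^ 2 * totalWeight U φ₀ (n + 1) j := by
  rw [totalWeight_succ]
  simp only [norm_sq_mulVec_weight, totalWeight, Finset.mul_sum]
  exact Finset.sum_comm

theorem bidx_injective : Function.Injective bidx := by
  intro b b'
  cases b <;> cases b' <;> simp [bidx]

def weightMatrix (n : ℕ) : Matrix (Fin 2) (Fin n → Bool) ℂ :=
  of fun i ξ => weight U φ₀ ξ i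

theorem decMat_A0_eq_conjTranspose_mul (n : ℕ) :
    decMat U φ₀ (A0 n) = (weightMatrix U φ₀ (n + 1))ᴴ * weightMatrix U φ₀ (n + 1) := by
  ext ξ η
  simp only [decMat, cdot, weightMatrix, of_apply, mul_apply, conjTranspose_apply,
    Complex.star_def]
  by_cases h : (ξ, η) ∈ A0 n
  · rw [if_pos h]
  rw [if_neg h]
  refine (Finset.sum_eq_zero fun i _ => ?_).symm
  by_cases hi : i = bidx (ξ (Fin.last n))
  · rw [weight_apply_eq_zero_of_ne U φ₀ η (hi ▸ fun h' => h (bidx_injective h')), mul_zero]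
  · rw [weight_apply_eq_zero_of_ne U φ₀ ξ hi, map_zero, zero_mul]

theorem weightMatrix_mul_conjTranspose (n : ℕ) :
    weightMatrix U φ₀ (n + 1) * (weightMatrix U φ₀ (n + 1))ᴴ =
      diagonal fun i => (totalWeight U φ₀ (n + 1) i : ℂ) := by
  ext i j
  simp only [weightMatrix, mul_apply, of_apply, conjTranspose_apply, Complex.star_def,
    totalWeight, diagonal_apply]
  split_ifs with hij
  · subst hij
    push_cast
    simp only [Complex.mul_conj']
  refine Finset.sum_eq_zero fun ξ _ => ?_
  by_cases hi : i = bidx (ξ (Fin.last n))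
  · rw [weight_apply_eq_zero_of_ne U φ₀ ξ fun h => hij (hi.trans h.symm), map_zero, mul_zero]
  · rw [weight_apply_eq_zero_of_ne U φ₀ ξ hi, zero_mul]

theorem vnEntropy_decMat_A0_eq_totalWeight (n : ℕ) :
    vnEntropy (decMat U φ₀ (A0 n)) =
      -∑ i, totalWeight U φ₀ (n + 1) i * Real.logb 2 (totalWeight U φ₀ (n + 1) i) := by
  rw [decMat_A0_eq_conjTranspose_mul]
  refine vnEntropy_mul_of_mul_eq_diagonal _ _ _ ?_ (weightMatrix_mul_conjTranspose U φ₀ n)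
  simpa using Nat.le_self_pow n.succ_ne_zero 2

end Weight

section UnitaryStep
variable {U : Matrix (Fin 2) (Fin 2) ℂ} (hU : U ∈ unitaryGroup (Fin 2) ℂ) (φ₀ : Fin 2 → ℂ)
include hU

theorem sum_totalWeight (n : ℕ) : ∑ i, totalWeight U φ₀ n i = ∑ i, ‖φ₀ i‖ ^ 2 := by
  induction n with
  | zero => simp only [totalWeight_zero]
  | succ n ih =>
    calc ∑ i, totalWeight U φ₀ (n + 1) i
        = ∑ ξ : Fin n → Bool, ∑ i, ‖(U *ᵥ weight U φ₀ ξ) i‖ ^ 2 := by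
          simp only [totalWeight_succ]
          exact Finset.sum_comm
      _ = ∑ i, totalWeight U φ₀ n i := by
          simp only [sum_norm_sq_mulVec_of_mem_unitaryGroup hU, totalWeight]
          exact Finset.sum_comm
      _ = ∑ i, ‖φ₀ i‖ ^ 2 := ih

theorem totalWeight_one_sub_totalWeight_zero (n : ℕ) :
    totalWeight U φ₀ (n + 1) 1 - totalWeight U φ₀ (n + 1) 0 =
      (2 * ‖U 0 0‖ ^ 2 - 1) ^ n * (‖(U *ᵥ φ₀) 1‖ ^ 2 - ‖(U *ᵥ φ₀) 0‖ ^ 2) := by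
  induction n with
  | zero => simp [totalWeight_succ, weight_of_isEmpty]
  | succ n ih =>
    have col₀ := sum_norm_sq_col_of_mem_unitaryGroup hU 0
    have col₁ := sum_norm_sq_col_of_mem_unitaryGroup hU 1
    have row₀ := sum_norm_sq_row_of_mem_unitaryGroup hU 0
    simp only [Fin.sum_univ_two] at col₀ col₁ row₀
    rw [totalWeight_succ_succ, totalWeight_succ_succ, Fin.sum_univ_two, Fin.sum_univ_two]
    linear_combination (2 * ‖U 0 0‖ ^ 2 - 1) * ih + totalWeight U φ₀ (n + 1) 0 * col₀ +
      totalWeight U φ₀ (n + 1) 1 * col₁ - 2 * totalWeight U φ₀ (n + 1) 1 * row₀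

end UnitaryStep

theorem vnEntropy_decMat_A0_general
    (a b c d α β : ℂ)
    (hU : !![a, b; c, d] ∈ Matrix.unitaryGroup (Fin 2) ℂ)
    (hφ : ‖α‖ ^ 2 + ‖β‖ ^ 2 = 1)
    (p q p₀ q₀ : ℝ)
    (hp : p = ‖a‖ ^ 2) (hq : q = 1 - p)
    (hp₀ : p₀ = ‖c * α + d * β‖ ^ 2) (hq₀ : q₀ = 1 - p₀)
    (n : ℕ) :
    vnEntropy (decMat !![a, b; c, d] ![α, β] (A0 n)) =
      -(((1 + (p - q) ^ n * (p₀ - q₀)) / 2) *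
          Real.logb 2 ((1 + (p - q) ^ n * (p₀ - q₀)) / 2) +
        ((1 - (p - q) ^ n * (p₀ - q₀)) / 2) *
          Real.logb 2 ((1 - (p - q) ^ n * (p₀ - q₀)) / 2)) := by
  have hUφ : !![a, b; c, d] *ᵥ ![α, β] = ![a * α + b * β, c * α + d * β] := by
    ext i
    fin_cases i <;> simp [mulVec, dotProduct]
  have hφ' : ‖a * α + b * β‖ ^ 2 + ‖c * α + d * β‖ ^ 2 = 1 := by
    simpa [hUφ, hφ] using sum_norm_sq_mulVec_of_mem_unitaryGroup hU ![α, β]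
  have hsum := sum_totalWeight hU ![α, β] (n + 1)
  have hdiff := totalWeight_one_sub_totalWeight_zero hU ![α, β] n
  simp only [Fin.sum_univ_two, hUφ, cons_val_zero, cons_val_one, of_apply, hφ] at hsum hdiff
  have hpq : 2 * ‖a‖ ^ 2 - 1 = p - q := by rw [hq, hp]; ring
  have hpq₀ : ‖c * α + d * β‖ ^ 2 - ‖a * α + b * β‖ ^ 2 = p₀ - q₀ := by
    rw [hq₀, hp₀]; linear_combination -hφ'
  rw [hpq, hpq₀] at hdiff
  have h₁ : totalWeight !![a, b; c, d] ![α, β] (n + 1) 1 = (1 + (p - q) ^ n * (p₀ - q₀)) / 2 := by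
    linear_combination (hsum + hdiff) / 2
  have h₀ : totalWeight !![a, b; c, d] ![α, β] (n + 1) 0 = (1 - (p - q) ^ n * (p₀ - q₀)) / 2 := by
    linear_combination (hsum - hdiff) / 2
  rw [vnEntropy_decMat_A0_eq_totalWeight, Fin.sum_univ_two, h₀, h₁, add_comm]

/-- `S_{A₀} = −(ρ_L log₂ ρ_L + ρ_R log₂ ρ_R)` for paths of length `n+1`,
where `ρ_L = (1 + (p−q)^n(p₀−q₀))/2` and `ρ_R = (1 − (p−q)^n(p₀−q₀))/2`. -/
theorem vnEntropy_decMat_A0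
    (a b c d α β : ℂ)
    (hU : !![a, b; c, d] ∈ Matrix.unitaryGroup (Fin 2) ℂ)
    (habcd : a * b * c * d ≠ 0)
    (hφ : ‖α‖ ^ 2 + ‖β‖ ^ 2 = 1)
    (p q p₀ q₀ : ℝ)
    (hp : p = ‖a‖ ^ 2) (hq : q = 1 - p)
    (hp₀ : p₀ = ‖c * α + d * β‖ ^ 2) (hq₀ : q₀ = 1 - p₀)
    (n : ℕ) :
    vnEntropy (decMat !![a, b; c, d] ![α, β] (A0 n)) =
      -(((1 + (p - q) ^ n * (p₀ - q₀)) / 2) *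
          Real.logb 2 ((1 + (p - q) ^ n * (p₀ - q₀)) / 2) +
        ((1 - (p - q) ^ n * (p₀ - q₀)) / 2) *
          Real.logb 2 ((1 - (p - q) ^ n * (p₀ - q₀)) / 2)) :=
  vnEntropy_decMat_A0_general a b c d α β hU hφ p q p₀ q₀ hp hq hp₀ hq₀ n
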